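/- Let k ≥ 1 and L ≥ 1 be integers with 2k + L ≤ n, let w ∈ ℝⁿ be a weight vector with w_i > 0 and max_i w_i = 1, let H₀ be a set of k indices carrying k largest weights of w and H₁ a set of k+L indices carrying k+L smallest weights of w (disjoint from H₀). If ‖w_{H₀}‖₁ < ‖w_{H₁}‖₁, then sup{ ‖z_{T₂ᶜ}‖₂²/‖z_{T₂}‖₂² : z ∈ ℝⁿ, z ≠ 0, ‖z_{H₀}‖_w = ‖z_{H₀ᶜ}‖_w, |supp(z)| = 2k+L } ≥ (L/k) / ( ‖w_{H₁}‖₁²/‖w_{H₀}‖₁² + 1 ). -/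

import Mathlib

/-!
The ratio is bounded above (by `n`), since every coordinate outside the `2k` largest is dominated
by one inside. The bound is attained at the vector equal to `‖w_{H₁}‖₁` on `H₀` and `‖w_{H₀}‖₁` on
`H₁`: both halves have weighted norm `‖w_{H₀}‖₁ ‖w_{H₁}‖₁`, and since `‖w_{H₀}‖₁ < ‖w_{H₁}‖₁` its `2k`
largest coordinates are `H₀` together with `k` coordinates of `H₁`, so the ratio equals
`L ‖w_{H₀}‖₁² / (k ‖w_{H₁}‖₁² + k ‖w_{H₀}‖₁²)`.
-/

open scoped BigOperators ENNReal RealInnerProductSpace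
open MeasureTheory Metric

noncomputable section

/-- The set of `k`-sparse vectors of `ℝⁿ`. -/
def sparseVecs (n k : ℕ) : Set (EuclideanSpace ℝ (Fin n)) :=
  {x | ∃ s : Finset (Fin n), s.card ≤ k ∧ ∀ i ∉ s, x i = 0}

/-- Descent set (collection of descent vectors) of `R` at `x`. -/
def descentCone {n : ℕ} (R : EuclideanSpace ℝ (Fin n) → ℝ) (x : EuclideanSpace ℝ (Fin n)) :
    Set (EuclideanSpace ℝ (Fin n)) := {z | R (x + z) ≤ R x}

/-- Descent vectors of `R` at the model set `S`. -/
def descentConeSet {n : ℕ} (R : EuclideanSpace ℝ (Fin n) → ℝ)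
    (S : Set (EuclideanSpace ℝ (Fin n))) : Set (EuclideanSpace ℝ (Fin n)) :=
  ⋃ x ∈ S, descentCone R x

/-- Weighted ℓ¹-norm `‖z‖_w = ∑ i, w i * |z i|`. -/
def wNorm {n : ℕ} (w : Fin n → ℝ) (z : EuclideanSpace ℝ (Fin n)) : ℝ := ∑ i, w i * |z i|

/-- Restriction of a vector to a set of coordinates (`z_S`). -/
def coordRestrict {n : ℕ} (z : EuclideanSpace ℝ (Fin n)) (S : Finset (Fin n)) :
    EuclideanSpace ℝ (Fin n) := WithLp.toLp 2 (fun i => if i ∈ S then z i else 0)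


section TopSets

variable {α β : Type*} [LinearOrder β] {f : α → β} {S T : Finset α}

def IsTopSet (f : α → β) (T : Finset α) : Prop := ∀ i ∈ T, ∀ j ∉ T, f j ≤ f i

def IsStrictTopSet (f : α → β) (S : Finset α) : Prop := ∀ i ∈ S, ∀ j ∉ S, f j < f i

theorem IsTopSet.subset_or_subset (hT : IsTopSet f T) (hS : IsStrictTopSet f S) :
    S ⊆ T ∨ T ⊆ S := by
  by_contra! h
  obtain ⟨⟨s, hsS, hsT⟩, ⟨t, htT, htS⟩⟩ := And.imp Finset.not_subset.mp Finset.not_subset.mp h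
  exact (hS s hsS t htS).not_ge (hT t htT s hsT)

theorem IsStrictTopSet.subset_of_card_le (hS : IsStrictTopSet f S) (hT : IsTopSet f T)
    (hcard : S.card ≤ T.card) : S ⊆ T :=
  (hT.subset_or_subset hS).elim id fun hTS => (Finset.eq_of_subset_of_card_le hTS hcard).ge

theorem IsTopSet.subset_of_card_le (hT : IsTopSet f T) (hS : IsStrictTopSet f S)
    (hcard : T.card ≤ S.card) : T ⊆ S :=
  (hT.subset_or_subset hS).elim (fun hST => (Finset.eq_of_subset_of_card_le hST hcard).ge) id

end TopSets

theorem isStrictTopSet_support {ι : Type*} [Fintype ι] (x : ι → ℝ) :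
    IsStrictTopSet (fun i => |x i|) (Finset.univ.filter fun i => x i ≠ 0) := by
  intro i hi j hj
  simp only [Finset.mem_filter, Finset.mem_univ, true_and, not_not] at hi hj
  simpa [hj] using hi

section CoordRestrict

variable {n : ℕ}

theorem normSq_coordRestrict (z : EuclideanSpace ℝ (Fin n)) (S : Finset (Fin n)) :
    ‖coordRestrict z S‖ ^ 2 = ∑ i ∈ S, z i ^ 2 := by
  simp [EuclideanSpace.norm_sq_eq, coordRestrict, apply_ite]

theorem wNorm_coordRestrict (w : Fin n → ℝ) (z : EuclideanSpace ℝ (Fin n)) (S : Finset (Fin n)) :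
    wNorm w (coordRestrict z S) = ∑ i ∈ S, w i * |z i| := by
  simp [wNorm, coordRestrict, apply_ite]

theorem IsTopSet.normSq_coordRestrict_compl_le {z : EuclideanSpace ℝ (Fin n)} {T : Finset (Fin n)}
    (hT : IsTopSet (fun i => |z i|) T) (hne : T.Nonempty) :
    ‖coordRestrict z Tᶜ‖ ^ 2 ≤ Tᶜ.card * ‖coordRestrict z T‖ ^ 2 := by
  obtain ⟨i, hi⟩ := hne
  rw [normSq_coordRestrict, normSq_coordRestrict]
  calc ∑ j ∈ Tᶜ, z j ^ 2 ≤ ∑ _j ∈ Tᶜ, z i ^ 2 :=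
        Finset.sum_le_sum fun j hj => sq_le_sq.mpr (hT i hi j (Finset.mem_compl.mp hj))
    _ = Tᶜ.card * z i ^ 2 := by rw [Finset.sum_const, nsmul_eq_mul]
    _ ≤ Tᶜ.card * ∑ j ∈ T, z j ^ 2 := by
        gcongr
        exact Finset.single_le_sum (f := fun j => z j ^ 2) (fun j _ => sq_nonneg _) hi

end CoordRestrict

section StepVec

variable {n : ℕ} {H₀ H₁ : Finset (Fin n)} {a b : ℝ}

def stepVec (H₀ H₁ : Finset (Fin n)) (a b : ℝ) : EuclideanSpace ℝ (Fin n) :=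
  WithLp.toLp 2 fun i => if i ∈ H₀ then a else if i ∈ H₁ then b else 0

theorem sum_stepVec (hdisj : Disjoint H₀ H₁) (g : Fin n → ℝ → ℝ) (hg : ∀ i, g i 0 = 0)
    (U : Finset (Fin n)) :
    ∑ i ∈ U, g i (stepVec H₀ H₁ a b i) = ∑ i ∈ U ∩ H₀, g i a + ∑ i ∈ U ∩ H₁, g i b := by
  rw [← Finset.sum_ite_mem, ← Finset.sum_ite_mem, ← Finset.sum_add_distrib]
  refine Finset.sum_congr rfl fun i _ => ?_
  by_cases h₀ : i ∈ H₀
  · simp [stepVec, h₀, Finset.disjoint_left.mp hdisj h₀]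
  · by_cases h₁ : i ∈ H₁ <;> simp [stepVec, h₀, h₁, hg]

theorem normSq_coordRestrict_stepVec (hdisj : Disjoint H₀ H₁) (U : Finset (Fin n)) :
    ‖coordRestrict (stepVec H₀ H₁ a b) U‖ ^ 2 = (U ∩ H₀).card * a ^ 2 + (U ∩ H₁).card * b ^ 2 := by
  rw [normSq_coordRestrict, sum_stepVec hdisj (fun _ x => x ^ 2) (fun _ => zero_pow two_ne_zero)]
  simp only [Finset.sum_const, nsmul_eq_mul]

theorem wNorm_coordRestrict_stepVec_self (hdisj : Disjoint H₀ H₁) (w : Fin n → ℝ) :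
    wNorm w (coordRestrict (stepVec H₀ H₁ a b) H₀) = |a| * ∑ i ∈ H₀, w i := by
  rw [wNorm_coordRestrict, sum_stepVec hdisj (fun i x => w i * |x|) (fun _ => by simp),
    Finset.inter_self, Finset.disjoint_iff_inter_eq_empty.mp hdisj, Finset.sum_empty, add_zero,
    Finset.mul_sum]
  simp only [mul_comm]

theorem wNorm_coordRestrict_stepVec_compl (hdisj : Disjoint H₀ H₁) (w : Fin n → ℝ) :
    wNorm w (coordRestrict (stepVec H₀ H₁ a b) H₀ᶜ) = |b| * ∑ i ∈ H₁, w i := by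
  rw [wNorm_coordRestrict, sum_stepVec hdisj (fun i x => w i * |x|) (fun _ => by simp),
    Finset.disjoint_iff_inter_eq_empty.mp (disjoint_compl_left (a := H₀)), Finset.sum_empty,
    zero_add, Finset.inter_eq_right.mpr (Finset.subset_compl_iff_disjoint_left.mpr hdisj),
    Finset.mul_sum]
  simp only [mul_comm]

theorem support_stepVec (ha : a ≠ 0) (hb : b ≠ 0) :
    (Finset.univ.filter fun i => stepVec H₀ H₁ a b i ≠ 0) = H₀ ∪ H₁ := by
  ext i
  by_cases h₀ : i ∈ H₀
  · simp [stepVec, h₀, ha]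
  · by_cases h₁ : i ∈ H₁ <;> simp [stepVec, h₀, h₁, hb]

theorem isStrictTopSet_stepVec (hba : |b| < |a|) :
    IsStrictTopSet (fun i => |stepVec H₀ H₁ a b i|) H₀ := by
  intro i hi j hj
  by_cases h₁ : j ∈ H₁ <;> simp [stepVec, hi, hj, h₁, hba, (abs_nonneg b).trans_lt hba]

theorem IsTopSet.subset_stepVec {T : Finset (Fin n)} (hb : b ≠ 0) (hba : |b| < |a|)
    (hT : IsTopSet (fun i => |stepVec H₀ H₁ a b i|) T) (h₀ : H₀.card ≤ T.card)
    (h₁ : T.card ≤ (H₀ ∪ H₁).card) : H₀ ⊆ T ∧ T ⊆ H₀ ∪ H₁ := by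
  have hsupp := support_stepVec (H₀ := H₀) (H₁ := H₁) (abs_pos.mp ((abs_nonneg b).trans_lt hba)) hb
  exact ⟨(isStrictTopSet_stepVec hba).subset_of_card_le hT h₀,
    hsupp ▸ hT.subset_of_card_le (isStrictTopSet_support _) (hsupp ▸ h₁)⟩

theorem normSq_coordRestrict_stepVec_of_subset (hdisj : Disjoint H₀ H₁) {T : Finset (Fin n)}
    {m l : ℕ} (hH₀T : H₀ ⊆ T) (hTH : T ⊆ H₀ ∪ H₁) (hT : T.card = H₀.card + m)
    (hH₁ : H₁.card = m + l) :
    ‖coordRestrict (stepVec H₀ H₁ a b) T‖ ^ 2 = H₀.card * a ^ 2 + m * b ^ 2 ∧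
      ‖coordRestrict (stepVec H₀ H₁ a b) Tᶜ‖ ^ 2 = l * b ^ 2 := by
  have hTH₁ : (T ∩ H₁).card = m := by
    have hunion : T ∪ H₁ = H₀ ∪ H₁ :=
      (Finset.union_subset hTH Finset.subset_union_right).antisymm
        (Finset.union_subset_union hH₀T subset_rfl)
    have := Finset.card_union_add_card_inter T H₁
    rw [hunion, Finset.card_union_of_disjoint hdisj] at this
    omega
  have hTcH₁ : (Tᶜ ∩ H₁).card = l := by
    have := Finset.card_sdiff_add_card_inter H₁ T
    rw [Finset.sdiff_eq_inter_compl, Finset.inter_comm H₁, Finset.inter_comm H₁] at this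
    omega
  rw [normSq_coordRestrict_stepVec hdisj, normSq_coordRestrict_stepVec hdisj, hTH₁, hTcH₁,
    Finset.inter_eq_right.mpr hH₀T,
    Finset.disjoint_iff_inter_eq_empty.mp (disjoint_compl_left_iff.mpr hH₀T)]
  simp

end StepVec

theorem bddAbove_range_normSq_compl_div_normSq {n : ℕ}
    (T : EuclideanSpace ℝ (Fin n) → Finset (Fin n))
    (hT : ∀ z, (T z).Nonempty ∧ IsTopSet (fun i => |z i|) (T z)) :
    BddAbove (Set.range fun z => ‖coordRestrict z (T z)ᶜ‖ ^ 2 / ‖coordRestrict z (T z)‖ ^ 2) := by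
  refine ⟨n, ?_⟩
  rintro r ⟨z, rfl⟩
  refine div_le_of_le_mul₀ (sq_nonneg _) (Nat.cast_nonneg n) ?_
  calc ‖coordRestrict z (T z)ᶜ‖ ^ 2 ≤ (T z)ᶜ.card * ‖coordRestrict z (T z)‖ ^ 2 :=
        (hT z).2.normSq_coordRestrict_compl_le (hT z).1
    _ ≤ n * ‖coordRestrict z (T z)‖ ^ 2 := by
        gcongr
        exact_mod_cast (Finset.card_le_univ _).trans_eq (Fintype.card_fin n)

theorem BL_lower_bound_general
    (n k L : ℕ) (hk : 1 ≤ k)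
    (w : Fin n → ℝ) (hpos : ∀ i, 0 < w i)
    (T₂ : EuclideanSpace ℝ (Fin n) → Finset (Fin n))
    (hT₂ : ∀ z, (T₂ z).card = 2 * k ∧ ∀ i ∈ T₂ z, ∀ j ∉ T₂ z, |z j| ≤ |z i|)
    (H₀ H₁ : Finset (Fin n)) (hH₀card : H₀.card = k) (hH₁card : H₁.card = k + L)
    (hdisj : Disjoint H₀ H₁)
    (hw : ∑ i ∈ H₀, w i < ∑ i ∈ H₁, w i) :
    ((L : ℝ) / k) / ((∑ i ∈ H₁, w i) ^ 2 / (∑ i ∈ H₀, w i) ^ 2 + 1)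
      ≤ sSup {r : ℝ | ∃ z : EuclideanSpace ℝ (Fin n), z ≠ 0 ∧
          wNorm w (coordRestrict z H₀) = wNorm w (coordRestrict z H₀ᶜ) ∧
          (Finset.univ.filter fun i => z i ≠ 0).card = 2 * k + L ∧
          r = ‖coordRestrict z (T₂ z)ᶜ‖ ^ 2 / ‖coordRestrict z (T₂ z)‖ ^ 2} := by
  set W₀ := ∑ i ∈ H₀, w i
  set W₁ := ∑ i ∈ H₁, w i
  have hW₀ : 0 < W₀ := Finset.sum_pos (fun i _ => hpos i) (Finset.card_pos.mp (by omega))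
  have hW₁ : 0 < W₁ := hW₀.trans hw
  have hbdd := bddAbove_range_normSq_compl_div_normSq T₂ fun z =>
    ⟨Finset.card_pos.mp (by rw [(hT₂ z).1]; omega), (hT₂ z).2⟩
  set z := stepVec H₀ H₁ W₁ W₀
  have hcard : (H₀ ∪ H₁).card = 2 * k + L := by
    rw [Finset.card_union_of_disjoint hdisj]; omega
  have hsupp : (Finset.univ.filter fun i => z i ≠ 0).card = 2 * k + L := by
    rw [support_stepVec hW₁.ne' hW₀.ne', hcard]
  have hTcard := (hT₂ z).1
  obtain ⟨hH₀T, hTH⟩ := IsTopSet.subset_stepVec hW₀.ne'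
    (by rwa [abs_of_pos hW₀, abs_of_pos hW₁]) (hT₂ z).2 (by omega) (by omega)
  obtain ⟨hden, hnum⟩ :=
    normSq_coordRestrict_stepVec_of_subset (a := W₁) (b := W₀) hdisj hH₀T hTH (by omega) hH₁card
  refine le_csSup (hbdd.mono ?_) ⟨z, ?_, ?_, hsupp, ?_⟩
  · rintro r ⟨z, -, -, -, rfl⟩
    exact ⟨z, rfl⟩
  · intro hz
    rw [hz] at hsupp
    simp only [PiLp.zero_apply, ne_eq, not_true_eq_false, Finset.filter_false,
      Finset.card_empty] at hsupp
    omega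
  · rw [wNorm_coordRestrict_stepVec_self hdisj, wNorm_coordRestrict_stepVec_compl hdisj,
      abs_of_pos hW₀, abs_of_pos hW₁, mul_comm]
  · rw [hnum, hden, hH₀card]
    field_simp

/-- Lemma 5 of the paper, a lower bound on the constrained supremum `B_L(R)` for a
weighted ℓ¹-norm whose `k` largest weights have less mass than its `k+L` smallest weights. -/
theorem BL_lower_bound
    (n k L : ℕ) (hk : 1 ≤ k) (hL : 1 ≤ L) (hn : 2 * k + L ≤ n)
    (w : Fin n → ℝ) (hpos : ∀ i, 0 < w i) (hle : ∀ i, w i ≤ 1) (hmax : ∃ i, w i = 1)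
    (T₂ : EuclideanSpace ℝ (Fin n) → Finset (Fin n))
    (hT₂ : ∀ z, (T₂ z).card = 2 * k ∧ ∀ i ∈ T₂ z, ∀ j ∉ T₂ z, |z j| ≤ |z i|)
    (H₀ H₁ : Finset (Fin n)) (hH₀card : H₀.card = k) (hH₁card : H₁.card = k + L)
    (hdisj : Disjoint H₀ H₁)
    (hH₀ : ∀ i ∈ H₀, ∀ j ∉ H₀, w j ≤ w i)
    (hH₁ : ∀ i ∈ H₁, ∀ j ∉ H₁, w i ≤ w j)
    (hw : ∑ i ∈ H₀, w i < ∑ i ∈ H₁, w i) :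
    ((L : ℝ) / k) / ((∑ i ∈ H₁, w i) ^ 2 / (∑ i ∈ H₀, w i) ^ 2 + 1)
      ≤ sSup {r : ℝ | ∃ z : EuclideanSpace ℝ (Fin n), z ≠ 0 ∧
          wNorm w (coordRestrict z H₀) = wNorm w (coordRestrict z H₀ᶜ) ∧
          (Finset.univ.filter fun i => z i ≠ 0).card = 2 * k + L ∧
          r = ‖coordRestrict z (T₂ z)ᶜ‖ ^ 2 / ‖coordRestrict z (T₂ z)‖ ^ 2} :=
  BL_lower_bound_general n k L hk w hpos T₂ hT₂ H₀ H₁ hH₀card hH₁card hdisj hw
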